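/- For every α ∈ (0,1) and every β ∈ (0, π/2), the intersection of the level set C_α = {(w,z) : Φ(w)Φ(z) = α} with its counter-clockwise rotation by angle β about the origin consists of exactly one point. -/

import Mathlib

/-- The standard normal cumulative distribution function. -/
noncomputable def stdNormalCDF (w : ℝ) : ℝ :=
  ∫ x in Set.Iic w, (Real.sqrt (2 * Real.pi))⁻¹ * Real.exp (-x ^ 2 / 2)

/-!
On every circle centred at the origin, `Φ w * Φ z` is invariant under `(w, z) ↦ (z, w)` and
strictly decreases as the angle from the ray `w = z > 0` grows from `0` to `π`: along the circle
its derivative has the sign of `w Φ w / φ w - z Φ z / φ z`, where `w < z`, and `x ↦ x Φ x / φ x` is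
strictly increasing by the Mills-ratio bound. So two points of `C_α` on the same circle have the
same `w + z`. If `p = (w, z)` and its rotation `q = (x, y)` by `-β` both lie on `C_α`, then
`w + z = x + y` is a linear equation putting `p` on the line spanned by
`(cos β + sin β - 1, 1 - cos β + sin β)`, a direction with positive coordinates. Along that line
`Φ w * Φ z` increases strictly from `0` to `1`, and at its point of level `α` the rotation by `-β`
is the reflection in the diagonal.
-/

open Real Set MeasureTheory Filter Topology ProbabilityTheory

local notation "φ" => gaussianPDFReal 0 1

lemma gaussianPDFReal_zero_one : φ = fun x => (√(2 * π))⁻¹ * exp (-x ^ 2 / 2) := by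
  ext x
  simp [gaussianPDFReal]

lemma stdNormalCDF_eq_integral (w : ℝ) : stdNormalCDF w = ∫ x in Iic w, φ x := by
  rw [gaussianPDFReal_zero_one]
  rfl

lemma stdNormalCDF_eq_cdf : stdNormalCDF = cdf (gaussianReal 0 1) := by
  ext w
  rw [cdf_eq_real, measureReal_def, gaussianReal_apply_eq_integral _ one_ne_zero,
    ENNReal.toReal_ofReal (setIntegral_nonneg measurableSet_Iic
      fun x _ => gaussianPDFReal_nonneg 0 1 x), stdNormalCDF_eq_integral]

lemma hasDerivAt_gaussianPDFReal_zero_one (x : ℝ) : HasDerivAt φ (-x * φ x) x := by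
  have h : HasDerivAt (fun x : ℝ => -x ^ 2 / 2) (-x) x :=
    ((hasDerivAt_pow 2 x).neg.div_const 2).congr_deriv (by ring)
  rw [gaussianPDFReal_zero_one]
  exact (h.exp.const_mul _).congr_deriv (by ring)

lemma hasDerivAt_stdNormalCDF (x : ℝ) : HasDerivAt stdNormalCDF (φ x) x := by
  have hint : Integrable φ := integrable_gaussianPDFReal 0 1
  have hsplit : stdNormalCDF = fun w => stdNormalCDF 0 + ∫ t in (0 : ℝ)..w, φ t := by
    ext w
    rw [stdNormalCDF_eq_integral, stdNormalCDF_eq_integral,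
      ← intervalIntegral.integral_Iic_sub_Iic hint.integrableOn hint.integrableOn]
    ring
  rw [hsplit]
  have hcont : Continuous φ := by
    rw [gaussianPDFReal_zero_one]; fun_prop
  exact (intervalIntegral.integral_hasDerivAt_right hint.intervalIntegrable
    hcont.stronglyMeasurable.stronglyMeasurableAtFilter hcont.continuousAt).const_add _

lemma continuous_stdNormalCDF : Continuous stdNormalCDF :=
  continuous_iff_continuousAt.2 fun x => (hasDerivAt_stdNormalCDF x).continuousAt

lemma strictMono_stdNormalCDF : StrictMono stdNormalCDF :=
  strictMono_of_hasDerivAt_pos hasDerivAt_stdNormalCDF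
    fun x => gaussianPDFReal_pos 0 1 x one_ne_zero

lemma tendsto_stdNormalCDF_atBot : Tendsto stdNormalCDF atBot (𝓝 0) :=
  stdNormalCDF_eq_cdf ▸ tendsto_cdf_atBot _

lemma tendsto_stdNormalCDF_atTop : Tendsto stdNormalCDF atTop (𝓝 1) :=
  stdNormalCDF_eq_cdf ▸ tendsto_cdf_atTop _

lemma StrictMono.lt_of_tendsto_atBot {α β : Type*} [TopologicalSpace α] [Preorder α]
    [OrderClosedTopology α] [LinearOrder β] [NoMinOrder β] {f : β → α} {a : α}
    (hf : StrictMono f) (h : Tendsto f atBot (𝓝 a)) (x : β) : a < f x := by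
  obtain ⟨y, hy⟩ := exists_lt x
  exact (hf.monotone.le_of_tendsto h y).trans_lt (hf hy)

lemma stdNormalCDF_pos (x : ℝ) : 0 < stdNormalCDF x :=
  strictMono_stdNormalCDF.lt_of_tendsto_atBot tendsto_stdNormalCDF_atBot x

lemma tendsto_gaussianPDFReal_zero_one_atBot : Tendsto φ atBot (𝓝 0) := by
  have h : Tendsto (fun x : ℝ => -x ^ 2 / 2) atBot atBot := by
    have := (tendsto_neg_atTop_atBot.comp ((tendsto_pow_atTop two_ne_zero).comp
      tendsto_neg_atBot_atTop)).atBot_div_const (two_pos : (0 : ℝ) < 2)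
    simpa [Function.comp_def] using this
  rw [gaussianPDFReal_zero_one]
  simpa using (tendsto_exp_atBot.comp h).const_mul (√(2 * π))⁻¹

/-- Reflected to `-x`, this is the classical lower bound `x / (x ^ 2 + 1) < (1 - Φ x) / φ x`
for the Mills ratio. -/
lemma sq_add_one_mul_stdNormalCDF_add_mul_pos (x : ℝ) :
    0 < (x ^ 2 + 1) * stdNormalCDF x + x * φ x := by
  set M : ℝ → ℝ := fun x => stdNormalCDF x + x * φ x / (x ^ 2 + 1)
  have hderiv (x : ℝ) : HasDerivAt M (2 * φ x / (x ^ 2 + 1) ^ 2) x := by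
    have hnum := (hasDerivAt_id' x).mul (hasDerivAt_gaussianPDFReal_zero_one x)
    have hden := (hasDerivAt_pow 2 x).add_const 1
    refine ((hasDerivAt_stdNormalCDF x).add (hnum.div hden (by positivity))).congr_deriv ?_
    simp only [Pi.mul_apply]
    field_simp
    ring
  have hlim : Tendsto M atBot (𝓝 0) := by
    have hbound (x : ℝ) : ‖x * φ x / (x ^ 2 + 1)‖ ≤ φ x := by
      have hφ := gaussianPDFReal_pos 0 1 x one_ne_zero
      rw [Real.norm_eq_abs, abs_div, abs_mul, abs_of_pos hφ,
        abs_of_pos (show 0 < x ^ 2 + 1 by positivity), div_le_iff₀ (by positivity)]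
      have habs : |x| ≤ x ^ 2 + 1 := by nlinarith [abs_nonneg x, sq_abs x]
      nlinarith [mul_le_mul_of_nonneg_left habs hφ.le]
    simpa using tendsto_stdNormalCDF_atBot.add
      (squeeze_zero_norm hbound tendsto_gaussianPDFReal_zero_one_atBot)
  have hM := (strictMono_of_hasDerivAt_pos hderiv fun x =>
    div_pos (mul_pos two_pos (gaussianPDFReal_pos 0 1 x one_ne_zero)) (by positivity)
    ).lt_of_tendsto_atBot hlim x
  have hx : 0 < x ^ 2 + 1 := by positivity
  calc 0 < (x ^ 2 + 1) * M x := mul_pos hx hM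
    _ = _ := by simp only [M]; field_simp

lemma strictMono_mul_stdNormalCDF_div_gaussianPDFReal :
    StrictMono fun x => x * stdNormalCDF x / φ x := by
  refine strictMono_of_hasDerivAt_pos (fun x => ?_) fun x =>
    div_pos (sq_add_one_mul_stdNormalCDF_add_mul_pos x) (gaussianPDFReal_pos 0 1 x one_ne_zero)
  have hφ := (gaussianPDFReal_pos 0 1 x one_ne_zero).ne'
  refine (((hasDerivAt_id' x).mul (hasDerivAt_stdNormalCDF x)).div
    (hasDerivAt_gaussianPDFReal_zero_one x) hφ).congr_deriv ?_
  simp only [Pi.mul_apply]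
  field_simp
  ring

/-- Polar coordinates about the diagonal, scaled by `√2`: the point at angle `θ` from the ray
`{w = z > 0}` on the circle of radius `√2 * ρ`. -/
noncomputable def diagPolar (ρ θ : ℝ) : ℝ × ℝ := (ρ * cos θ - ρ * sin θ, ρ * cos θ + ρ * sin θ)

noncomputable def diagProfile (ρ θ : ℝ) : ℝ :=
  stdNormalCDF (diagPolar ρ θ).1 * stdNormalCDF (diagPolar ρ θ).2

lemma exists_eq_diagPolar (p : ℝ × ℝ) :
    ∃ θ ∈ Icc (-π) π, p = diagPolar √((p.1 ^ 2 + p.2 ^ 2) / 2) θ := by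
  set ζ : ℂ := ⟨(p.1 + p.2) / 2, (p.2 - p.1) / 2⟩
  have hnorm : ‖ζ‖ = √((p.1 ^ 2 + p.2 ^ 2) / 2) := by
    rw [Complex.norm_def, Complex.normSq_mk]
    congr 1
    ring
  have hcos : ‖ζ‖ * cos ζ.arg = (p.1 + p.2) / 2 := Complex.norm_mul_cos_arg ζ
  have hsin : ‖ζ‖ * sin ζ.arg = (p.2 - p.1) / 2 := Complex.norm_mul_sin_arg ζ
  refine ⟨ζ.arg, ⟨(Complex.neg_pi_lt_arg ζ).le, Complex.arg_le_pi ζ⟩, ?_⟩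
  rw [← hnorm]
  ext <;> simp only [diagPolar] <;> linarith

lemma diagPolar_neg (ρ θ : ℝ) : diagPolar ρ (-θ) = (diagPolar ρ θ).swap := by
  ext <;> simp only [diagPolar, cos_neg, sin_neg, Prod.swap] <;> ring

lemma diagProfile_abs (ρ θ : ℝ) : diagProfile ρ |θ| = diagProfile ρ θ := by
  rcases abs_cases θ with ⟨h, -⟩ | ⟨h, -⟩
  · rw [h]
  · rw [h, diagProfile, diagProfile, diagPolar_neg, Prod.fst_swap, Prod.snd_swap, mul_comm]

lemma hasDerivAt_diagProfile (ρ θ : ℝ) :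
    HasDerivAt (diagProfile ρ)
      ((diagPolar ρ θ).1 * stdNormalCDF (diagPolar ρ θ).1 * φ (diagPolar ρ θ).2 -
        (diagPolar ρ θ).2 * stdNormalCDF (diagPolar ρ θ).2 * φ (diagPolar ρ θ).1) θ := by
  have hcos := (hasDerivAt_cos θ).const_mul ρ
  have hsin := (hasDerivAt_sin θ).const_mul ρ
  have h₁ : HasDerivAt (fun θ => (diagPolar ρ θ).1) (-(diagPolar ρ θ).2) θ :=
    (hcos.sub hsin).congr_deriv (by simp only [diagPolar]; ring)
  have h₂ : HasDerivAt (fun θ => (diagPolar ρ θ).2) (diagPolar ρ θ).1 θ :=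
    (hcos.add hsin).congr_deriv (by simp only [diagPolar]; ring)
  exact (((hasDerivAt_stdNormalCDF _).comp θ h₁).mul
    ((hasDerivAt_stdNormalCDF _).comp θ h₂)).congr_deriv
      (by simp only [Function.comp_apply]; ring)

lemma diagProfile_strictAntiOn {ρ : ℝ} (hρ : 0 < ρ) : StrictAntiOn (diagProfile ρ) (Icc 0 π) := by
  have hcont : Continuous (diagProfile ρ) :=
    continuous_iff_continuousAt.2 fun θ => (hasDerivAt_diagProfile ρ θ).continuousAt
  refine strictAntiOn_of_hasDerivWithinAt_neg (convex_Icc 0 π) hcont.continuousOn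
    (fun θ _ => (hasDerivAt_diagProfile ρ θ).hasDerivWithinAt) fun θ hθ => ?_
  rw [interior_Icc] at hθ
  have hlt : (diagPolar ρ θ).1 < (diagPolar ρ θ).2 := by
    simp only [diagPolar]
    linarith [mul_pos hρ (sin_pos_of_pos_of_lt_pi hθ.1 hθ.2)]
  have h := strictMono_mul_stdNormalCDF_div_gaussianPDFReal hlt
  rw [div_lt_div_iff₀ (gaussianPDFReal_pos 0 1 _ one_ne_zero)
    (gaussianPDFReal_pos 0 1 _ one_ne_zero)] at h
  linarith

lemma add_eq_add_of_stdNormalCDF_mul_eq {p q : ℝ × ℝ}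
    (hnorm : p.1 ^ 2 + p.2 ^ 2 = q.1 ^ 2 + q.2 ^ 2)
    (h : stdNormalCDF p.1 * stdNormalCDF p.2 = stdNormalCDF q.1 * stdNormalCDF q.2) :
    p.1 + p.2 = q.1 + q.2 := by
  obtain ⟨θ, hθ, hp⟩ := exists_eq_diagPolar p
  obtain ⟨θ', hθ', hq⟩ := exists_eq_diagPolar q
  rw [← hnorm] at hq
  set ρ := √((p.1 ^ 2 + p.2 ^ 2) / 2)
  have hcos : ρ * cos θ = ρ * cos θ' := by
    rcases (show 0 ≤ ρ from Real.sqrt_nonneg _).eq_or_lt with hρ | hρ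
    · rw [← hρ, zero_mul, zero_mul]
    · rw [← cos_abs θ, ← cos_abs θ']
      congr 2
      refine (diagProfile_strictAntiOn hρ).injOn ⟨abs_nonneg θ, abs_le.2 hθ⟩
        ⟨abs_nonneg θ', abs_le.2 hθ'⟩ ?_
      rw [diagProfile_abs, diagProfile_abs, diagProfile, diagProfile, ← hp, ← hq, h]
  rw [hp, hq]
  simp only [diagPolar]
  linarith

lemma existsUnique_stdNormalCDF_mul_eq {a b α : ℝ} (ha : 0 < a) (hb : 0 < b)
    (hα : α ∈ Ioo 0 1) : ∃! t : ℝ, stdNormalCDF (t * a) * stdNormalCDF (t * b) = α := by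
  set f : ℝ → ℝ := fun t => stdNormalCDF (t * a) * stdNormalCDF (t * b)
  have hmono : StrictMono f := fun s t hst =>
    mul_lt_mul'' (strictMono_stdNormalCDF (mul_lt_mul_of_pos_right hst ha))
      (strictMono_stdNormalCDF (mul_lt_mul_of_pos_right hst hb))
      (stdNormalCDF_pos _).le (stdNormalCDF_pos _).le
  have hcont : Continuous f :=
    (continuous_stdNormalCDF.comp (continuous_mul_const a)).mul
      (continuous_stdNormalCDF.comp (continuous_mul_const b))
  have hbot : Tendsto f atBot (𝓝 0) := by
    simpa using (tendsto_stdNormalCDF_atBot.comp (tendsto_id.atBot_mul_const ha)).mul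
      (tendsto_stdNormalCDF_atBot.comp (tendsto_id.atBot_mul_const hb))
  have htop : Tendsto f atTop (𝓝 1) := by
    simpa using (tendsto_stdNormalCDF_atTop.comp (tendsto_id.atTop_mul_const ha)).mul
      (tendsto_stdNormalCDF_atTop.comp (tendsto_id.atTop_mul_const hb))
  obtain ⟨t, ht⟩ : α ∈ range f := mem_range_of_exists_le_of_exists_ge hcont
    ((hbot.eventually (gt_mem_nhds hα.1)).exists.imp fun _ => le_of_lt)
    ((htop.eventually (lt_mem_nhds hα.2)).exists.imp fun _ => le_of_lt)
  exact ⟨t, ht, fun s hs => hmono.injective (hs.trans ht.symm)⟩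

theorem stmt16 (α β : ℝ) (hα : α ∈ Set.Ioo (0 : ℝ) 1) (hβ : β ∈ Set.Ioo 0 (Real.pi / 2)) :
    ∃! p : ℝ × ℝ,
      stdNormalCDF p.1 * stdNormalCDF p.2 = α ∧
      ∃ q : ℝ × ℝ, stdNormalCDF q.1 * stdNormalCDF q.2 = α ∧
        p.1 = q.1 * Real.cos β - q.2 * Real.sin β ∧
        p.2 = q.1 * Real.sin β + q.2 * Real.cos β := by
  obtain ⟨hβ₀, hβ₁⟩ := hβ
  have hsin : 0 < sin β := sin_pos_of_pos_of_lt_pi hβ₀ (by linarith [pi_pos])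
  have hcos : 0 < cos β := cos_pos_of_mem_Ioo ⟨by linarith, hβ₁⟩
  have hsc := sin_sq_add_cos_sq β
  set u := cos β + sin β - 1
  set v := 1 - cos β + sin β
  have hu : 0 < u := by nlinarith [mul_pos hsin hcos]
  have hv : 0 < v := by linarith [cos_le_one β]
  obtain ⟨t, ht, ht_unique⟩ := existsUnique_stdNormalCDF_mul_eq hu hv hα
  refine ⟨(t * u, t * v), ⟨ht, (t * v, t * u), (mul_comm _ _).trans ht, ?_, ?_⟩, ?_⟩
  · linear_combination t * hsc
  · linear_combination -t * hsc
  rintro ⟨w, z⟩ ⟨hp, ⟨x, y⟩, hq, h₁, h₂⟩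
  dsimp only at hp hq h₁ h₂
  have hnorm : w ^ 2 + z ^ 2 = x ^ 2 + y ^ 2 := by
    linear_combination (w + x * cos β - y * sin β) * h₁ + (z + x * sin β + y * cos β) * h₂
      + (x ^ 2 + y ^ 2) * hsc
  have hsum : w + z = x + y := add_eq_add_of_stdNormalCDF_mul_eq (p := (w, z)) (q := (x, y))
    hnorm (hp.trans hq.symm)
  have hline : w * v = z * u := by
    linear_combination (v - 1) * h₁ - (u + 1) * h₂ + hsum - (x + y) * hsc
  obtain rfl : w / u = t := ht_unique _ (by
    beta_reduce
    rwa [div_mul_cancel₀ w hu.ne', div_mul_eq_mul_div, hline, mul_div_cancel_right₀ z hu.ne'])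
  ext
  · field_simp
  · field_simp
    linarith
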